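/- arXiv:1108.0481 — 2 statements merged into one kernel-verified Lean document; each statement's English description precedes it below -/
import Mathlib

section
/- Fix S ≥ 3 and T ≥ 4. The Smith normal form of the design matrix A of the THMC model without initial parameters and without self-loops is diag(1,…,1,T−1) of rank S(S−1); equivalently, the cokernel of the column lattice of A is cyclic of order T−1. -/
/-!
Every column of the design matrix `A` sums to `T - 1`, so its column lattice lies in
`{x | (T - 1) ∣ ∑ x}`. Changing only the last (or only the first) letter of a loop-free word
changes exactly one transition, so the lattice contains `e (i, j) - e (i, k)` and
`e (j, i) - e (k, i)`; through a third letter these connect any two off-diagonal pairs, and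
together with a single column they span all of `{x | (T - 1) ∣ ∑ x}`. Replacing the last row by
the sum of all rows maps this lattice onto `{y | (T - 1) ∣ y last}`, the column lattice of
`diag(1, …, 1, T - 1)`. Over a PID two matrices with the same column lattice differ by a
unimodular column operation: both are split surjections of `R^N` onto the (free) lattice, and
their kernels are free of the same rank.
-/

/-- The number of transitions `p.1 → p.2` in the word `w` of length `T` over `[S]`. -/
def trCount (S T : ℕ) (w : Fin T → Fin S) (p : Fin S × Fin S) : ℕ :=
  (Finset.univ.filter (fun t : Fin (T - 1) =>
    w ⟨t.1, by have := t.2; omega⟩ = p.1 ∧ w ⟨t.1 + 1, by have := t.2; omega⟩ = p.2)).card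

/-- A word has no self-loops (no two consecutive equal letters). -/
def NoLoop (S T : ℕ) (w : Fin T → Fin S) : Prop :=
  ∀ t : Fin (T - 1), w ⟨t.1, by have := t.2; omega⟩ ≠ w ⟨t.1 + 1, by have := t.2; omega⟩

instance (S T : ℕ) : DecidablePred (NoLoop S T) := fun w => by
  unfold NoLoop; infer_instance

open LinearMap Matrix

theorem LinearMap.exists_linearEquiv_comp_eq {R M N : Type*} [CommRing R] [IsDomain R]
    [IsPrincipalIdealRing R] [AddCommGroup M] [Module R M] [Module.Free R M] [Module.Finite R M]
    [AddCommGroup N] [Module R N] [Module.Free R N] [Module.Finite R N]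
    {f g : M →ₗ[R] N} (hf : Function.Surjective f) (hg : Function.Surjective g) :
    ∃ e : M ≃ₗ[R] M, g ∘ₗ e = f := by
  have hsplit {h : M →ₗ[R] N} (hh : Function.Surjective h) :
      ∃ γ : M ≃ₗ[R] ker h × N, h = snd R (ker h) N ∘ₗ γ.toLinearMap := by
    obtain ⟨l, hl⟩ := Module.projective_lifting_property h LinearMap.id hh
    obtain ⟨γ, -, hγ⟩ :=
      (exact_subtype_ker_map h).splitSurjectiveEquiv Subtype.val_injective ⟨l, hl⟩
    exact ⟨γ, hγ⟩
  obtain ⟨γf, hγf⟩ := hsplit hf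
  obtain ⟨γg, hγg⟩ := hsplit hg
  have hrank : Module.finrank R (ker f) = Module.finrank R (ker g) := by
    have hf' := γf.finrank_eq
    have hg' := γg.finrank_eq
    rw [Module.finrank_prod] at hf' hg'
    omega
  let κ : ker f ≃ₗ[R] ker g := LinearEquiv.ofFinrankEq _ _ hrank
  refine ⟨γf ≪≫ₗ κ.prodCongr (.refl R N) ≪≫ₗ γg.symm, ?_⟩
  ext x
  simp [hγf, hγg]

namespace Matrix

variable {R m n : Type*} [Fintype n]

theorem exists_isUnit_det_mul_eq_of_range_eq [CommRing R] [IsDomain R] [IsPrincipalIdealRing R]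
    [Fintype m] [DecidableEq n] {A D : Matrix m n R}
    (h : range A.mulVecLin = range D.mulVecLin) :
    ∃ V : Matrix n n R, IsUnit V.det ∧ A * V = D := by
  let g := A.mulVecLin.codRestrict (range D.mulVecLin) fun x => h ▸ mem_range_self _ x
  have hg : Function.Surjective g := fun ⟨y, hy⟩ => by
    obtain ⟨x, rfl⟩ := h ▸ hy
    exact ⟨x, rfl⟩
  obtain ⟨e, he⟩ := exists_linearEquiv_comp_eq D.mulVecLin.surjective_rangeRestrict hg
  refine ⟨toMatrix' e, det_toMatrix' (e : (n → R) →ₗ[R] n → R) ▸ e.isUnit_det', ?_⟩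
  apply toLin'.injective
  rw [toLin'_mul, toLin'_toMatrix', toLin'_apply', toLin'_apply']
  exact LinearMap.ext fun x => congrArg Subtype.val (LinearMap.congr_fun he x)

theorem mem_range_mul_mulVecLin_iff [CommRing R] [Fintype m] [DecidableEq m] {U : Matrix m m R}
    (hU : IsUnit U.det) {A : Matrix m n R} {y : m → R} :
    y ∈ range (U * A).mulVecLin ↔ U⁻¹ *ᵥ y ∈ range A.mulVecLin := by
  simp only [mem_range, mulVecLin_apply, ← mulVec_mulVec]
  constructor
  · rintro ⟨x, rfl⟩
    exact ⟨x, by rw [mulVec_mulVec, nonsing_inv_mul _ hU, one_mulVec]⟩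
  · rintro ⟨x, hx⟩
    exact ⟨x, by rw [hx, mulVec_mulVec, mul_nonsing_inv _ hU, one_mulVec]⟩

theorem mem_range_submatrix_mulVecLin_iff [CommSemiring R] {m' n' : Type*} [Fintype n']
    (A : Matrix m n R) (r : m' ≃ m) (c : n' ≃ n) {y : m' → R} :
    y ∈ range (A.submatrix r c).mulVecLin ↔ y ∘ r.symm ∈ range A.mulVecLin := by
  simp only [mem_range, mulVecLin_apply, submatrix_mulVec_equiv]
  constructor
  · rintro ⟨x, rfl⟩
    exact ⟨x ∘ c.symm, by ext; simp⟩
  · rintro ⟨x, hx⟩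
    refine ⟨x ∘ c, ?_⟩
    rw [Function.comp_assoc, c.self_comp_symm, Function.comp_id, hx]
    ext
    simp

theorem mem_range_mulVecLin_iff_forall_dvd [CommSemiring R] [DecidableEq n] {D : Matrix m n R}
    {e : m ↪ n} {d : m → R} (hD : ∀ i j, D i j = if e i = j then d i else 0) {y : m → R} :
    y ∈ range D.mulVecLin ↔ ∀ i, d i ∣ y i := by
  have hDx : ∀ x, D *ᵥ x = fun i => d i * x (e i) := fun x => by
    ext i
    simp [mulVec, dotProduct, hD]
  simp only [mem_range, mulVecLin_apply, hDx]
  constructor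
  · rintro ⟨x, rfl⟩ i
    exact dvd_mul_right _ _
  · intro hy
    choose q hq using hy
    exact ⟨Function.extend e q 0, funext fun i => by rw [e.injective.extend_apply, hq]⟩

theorem det_updateRow_one_one [CommRing R] [DecidableEq n] (i : n) :
    ((1 : Matrix n n R).updateRow i 1).det = 1 := by
  have hones : (1 : n → R) = ∑ k, (1 : R) • (1 : Matrix n n R) k := by
    ext j
    rw [Finset.sum_apply]
    simp [one_apply]
  rw [hones, det_updateRow_sum, det_one, one_smul]

theorem updateRow_one_one_mulVec_self [CommRing R] [DecidableEq n] (i : n) (z : n → R) :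
    ((1 : Matrix n n R).updateRow i 1 *ᵥ z) i = ∑ j, z j := by
  simp only [mulVec, updateRow_self, one_dotProduct]

end Matrix

theorem Submodule.mem_of_dvd_sum {R ι : Type*} [CommRing R] [Fintype ι] [DecidableEq ι]
    {L : Submodule R (ι → R)} (hL : ∀ i j, Pi.single i 1 - Pi.single j 1 ∈ L) {v : ι → R}
    (hv : v ∈ L) {x : ι → R} (hx : (∑ i, v i) ∣ ∑ i, x i) : x ∈ L := by
  obtain ⟨k, hk⟩ := hx
  set z := x - k • v
  have hz : ∑ i, z i = 0 := by simp [z, Finset.sum_sub_distrib, ← Finset.mul_sum, hk, mul_comm]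
  have hzL : z ∈ L := by
    rcases isEmpty_or_nonempty ι with hι | ⟨⟨j⟩⟩
    · simp [Subsingleton.elim z 0]
    · have hz' : z = ∑ i, z i • (Pi.single i 1 - Pi.single j 1) := by
        ext l
        simp [Finset.sum_apply, Pi.single_apply, mul_sub, Finset.sum_sub_distrib, hz]
      rw [hz']
      exact L.sum_mem fun i _ => L.smul_mem _ (hL i j)
  simpa [z] using L.add_mem hzL (L.smul_mem k hv)

def smithDiag {R : Type*} [Zero R] [One R] (m N : ℕ) (d : R) : Matrix (Fin m) (Fin N) R :=
  Matrix.of fun i j => if (i : ℕ) = (j : ℕ) then (if (i : ℕ) = m - 1 then d else 1) else 0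

theorem mem_range_smithDiag_iff {R : Type*} [CommSemiring R] {m N : ℕ} (hmN : m ≤ N)
    (hm : 0 < m) (d : R) {y : Fin m → R} :
    y ∈ range (smithDiag m N d).mulVecLin ↔ d ∣ y ⟨m - 1, by omega⟩ := by
  rw [mem_range_mulVecLin_iff_forall_dvd (e := Fin.castLEEmb hmN)
    (d := fun i => if (i : ℕ) = m - 1 then d else 1) fun i j => by simp [smithDiag, Fin.ext_iff]]
  refine ⟨fun h => by simpa using h ⟨m - 1, by omega⟩, fun h i => ?_⟩
  split_ifs with hi
  · exact (Fin.ext hi : i = ⟨m - 1, by omega⟩) ▸ h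
  · exact one_dvd _

abbrev OffDiag (S : ℕ) := {p : Fin S × Fin S // p.1 ≠ p.2}

abbrev LoopFreeWord (S T : ℕ) := {w : Fin T → Fin S // NoLoop S T w}

def designMatrix (S T : ℕ) : Matrix (OffDiag S) (LoopFreeWord S T) ℤ :=
  Matrix.of fun p w => trCount S T w.1 p.1

section DesignMatrix

variable {S T : ℕ}

def transition (w : Fin T → Fin S) (t : Fin (T - 1)) : Fin S × Fin S :=
  (w ⟨t, Nat.lt_of_lt_pred t.2⟩, w ⟨t + 1, Nat.add_lt_of_lt_sub t.2⟩)

theorem natCast_trCount (w : Fin T → Fin S) (p : Fin S × Fin S) :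
    (trCount S T w p : ℤ) = ∑ t, if transition w t = p then 1 else 0 := by
  rw [trCount, Finset.card_filter]
  push_cast
  simp only [transition, Prod.ext_iff, eq_comm]

theorem sum_trCount (hT : 1 ≤ T) {w : Fin T → Fin S} (hw : NoLoop S T w) :
    ∑ p : OffDiag S, (trCount S T w p.1 : ℤ) = T - 1 := by
  simp_rw [natCast_trCount]
  rw [Finset.sum_comm]
  have hone (t : Fin (T - 1)) :
      ∑ p : OffDiag S, (if transition w t = p.1 then (1 : ℤ) else 0) = 1 := by
    refine Eq.trans ?_ (Fintype.sum_ite_eq (⟨transition w t, hw t⟩ : OffDiag S) fun _ => 1)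
    simp only [Subtype.ext_iff]
  simp [hone, Nat.cast_sub hT]

theorem trCount_sub_trCount {w₁ w₂ : Fin T → Fin S} (t₀ : Fin (T - 1))
    (h : ∀ t ≠ t₀, transition w₁ t = transition w₂ t) (p : Fin S × Fin S) :
    (trCount S T w₁ p : ℤ) - trCount S T w₂ p =
      (if transition w₁ t₀ = p then 1 else 0) - if transition w₂ t₀ = p then 1 else 0 := by
  rw [natCast_trCount, natCast_trCount, ← Finset.sum_sub_distrib,
    Finset.sum_eq_single t₀ (fun t _ ht => by simp [h t ht]) (by simp)]

theorem exists_noLoop_apply_eq (hS : 2 ≤ S) (t₀ : Fin T) (a : Fin S) :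
    ∃ u, NoLoop S T u ∧ u t₀ = a := by
  have : Nontrivial (Fin S) := Fin.nontrivial_iff_two_le.mpr hS
  obtain ⟨b, hb⟩ := exists_ne a
  refine ⟨fun t => if t.1 % 2 = t₀.1 % 2 then a else b, fun t => ?_, by simp⟩
  simp only
  split_ifs <;> omega

theorem transition_update_last (hT : 2 ≤ T) (u : Fin T → Fin S) (a : Fin S) (t : Fin (T - 1)) :
    transition (Function.update u ⟨T - 1, by omega⟩ a) t =
      if t.1 = T - 2 then (u ⟨T - 2, by omega⟩, a) else transition u t := by
  have := t.2
  by_cases ht : t.1 = T - 2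
  · simp [transition, ht, show T - 2 ≠ T - 1 by omega, show T - 2 + 1 = T - 1 by omega]
  · simp [transition, ht, show t.1 ≠ T - 1 by omega, show t.1 + 1 ≠ T - 1 by omega]

theorem transition_update_zero (hT : 2 ≤ T) (u : Fin T → Fin S) (a : Fin S) (t : Fin (T - 1)) :
    transition (Function.update u ⟨0, by omega⟩ a) t =
      if t.1 = 0 then (a, u ⟨1, by omega⟩) else transition u t := by
  by_cases ht : t.1 = 0 <;> simp [transition, ht]

theorem noLoop_iff_transition {w : Fin T → Fin S} :
    NoLoop S T w ↔ ∀ t, (transition w t).1 ≠ (transition w t).2 := Iff.rfl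

theorem designMatrix_mulVec_single (w : LoopFreeWord S T) :
    designMatrix S T *ᵥ Pi.single w 1 = fun p => (trCount S T w.1 p.1 : ℤ) :=
  mulVec_single_one _ _

theorem sum_designMatrix_mulVec (hT : 1 ≤ T) (x : LoopFreeWord S T → ℤ) :
    ∑ p, (designMatrix S T *ᵥ x) p = (T - 1) * ∑ w, x w := by
  simp only [mulVec, dotProduct]
  rw [Finset.sum_comm, Finset.mul_sum]
  simp_rw [← Finset.sum_mul, designMatrix, of_apply, sum_trCount hT (Subtype.prop _)]

theorem single_sub_single_mem_range {w₁ w₂ : Fin T → Fin S} (hw₁ : NoLoop S T w₁)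
    (hw₂ : NoLoop S T w₂) (t₀ : Fin (T - 1))
    (h : ∀ t ≠ t₀, transition w₁ t = transition w₂ t)
    {p q : OffDiag S} (hp : transition w₁ t₀ = p) (hq : transition w₂ t₀ = q) :
    Pi.single p 1 - Pi.single q 1 ∈ range (designMatrix S T).mulVecLin := by
  convert mem_range_self (designMatrix S T).mulVecLin
    (Pi.single ⟨w₁, hw₁⟩ 1 - Pi.single ⟨w₂, hw₂⟩ 1)
  ext r
  rw [mulVecLin_apply, mulVec_sub, Pi.sub_apply, Pi.sub_apply, designMatrix_mulVec_single,
    designMatrix_mulVec_single, trCount_sub_trCount t₀ h, hp, hq]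
  simp [Pi.single_apply, Subtype.ext_iff, eq_comm]

theorem single_sub_single_mem_range_of_fst_eq (hS : 2 ≤ S) (hT : 2 ≤ T) {p q : OffDiag S}
    (h : p.1.1 = q.1.1) :
    Pi.single p 1 - Pi.single q 1 ∈ range (designMatrix S T).mulVecLin := by
  obtain ⟨u, hu, hua⟩ := exists_noLoop_apply_eq (T := T) hS ⟨T - 2, by omega⟩ p.1.1
  have hw {r : OffDiag S} (hr : r.1.1 = p.1.1) :
      NoLoop S T (Function.update u ⟨T - 1, by omega⟩ r.1.2) := by
    refine noLoop_iff_transition.mpr fun t => ?_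
    rw [transition_update_last hT]
    split_ifs
    · exact hua ▸ hr ▸ r.2
    · exact hu t
  refine single_sub_single_mem_range (hw rfl) (hw h.symm) ⟨T - 2, by omega⟩
    (fun t ht => ?_) ?_ ?_
  · rw [transition_update_last hT, transition_update_last hT, if_neg, if_neg] <;>
      exact fun h' => ht (Fin.ext h')
  · simp [transition_update_last hT, hua]
  · simp [transition_update_last hT, hua, h]

theorem single_sub_single_mem_range_of_snd_eq (hS : 2 ≤ S) (hT : 2 ≤ T) {p q : OffDiag S}
    (h : p.1.2 = q.1.2) :
    Pi.single p 1 - Pi.single q 1 ∈ range (designMatrix S T).mulVecLin := by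
  obtain ⟨u, hu, hua⟩ := exists_noLoop_apply_eq (T := T) hS ⟨1, by omega⟩ p.1.2
  have hw {r : OffDiag S} (hr : r.1.2 = p.1.2) :
      NoLoop S T (Function.update u ⟨0, by omega⟩ r.1.1) := by
    refine noLoop_iff_transition.mpr fun t => ?_
    rw [transition_update_zero hT]
    split_ifs
    · exact hua ▸ hr ▸ r.2
    · exact hu t
  refine single_sub_single_mem_range (hw rfl) (hw h.symm) ⟨0, by omega⟩ (fun t ht => ?_) ?_ ?_
  · rw [transition_update_zero hT, transition_update_zero hT, if_neg, if_neg] <;>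
      exact fun h' => ht (Fin.ext h')
  · simp [transition_update_zero hT, hua]
  · simp [transition_update_zero hT, hua, h]

end DesignMatrix

theorem single_sub_single_mem_of_fst_eq_of_snd_eq {R : Type*} [Ring R] {S : ℕ} (hS : 3 ≤ S)
    {L : Submodule R (OffDiag S → R)}
    (hfst : ∀ p q : OffDiag S, p.1.1 = q.1.1 → Pi.single p 1 - Pi.single q 1 ∈ L)
    (hsnd : ∀ p q : OffDiag S, p.1.2 = q.1.2 → Pi.single p 1 - Pi.single q 1 ∈ L)
    (p q : OffDiag S) : Pi.single p 1 - Pi.single q 1 ∈ L := by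
  obtain ⟨x, -, hx⟩ := Finset.exists_mem_notMem_of_card_lt_card
    (s := {p.1.1, q.1.1}) (t := Finset.univ) ((Finset.card_le_two).trans_lt (by simp; omega))
  simp only [Finset.mem_insert, Finset.mem_singleton, not_or] at hx
  let px : OffDiag S := ⟨(p.1.1, x), Ne.symm hx.1⟩
  let qx : OffDiag S := ⟨(q.1.1, x), Ne.symm hx.2⟩
  simpa using L.add_mem (L.add_mem (hfst p px rfl) (hsnd px qx rfl)) (hfst qx q rfl)

theorem mem_range_designMatrix_iff {S T : ℕ} (hS : 3 ≤ S) (hT : 2 ≤ T)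
    {x : OffDiag S → ℤ} :
    x ∈ range (designMatrix S T).mulVecLin ↔ (T - 1 : ℤ) ∣ ∑ p, x p := by
  constructor
  · rintro ⟨y, rfl⟩
    exact ⟨_, sum_designMatrix_mulVec (by omega) y⟩
  · intro hx
    obtain ⟨w, hw, -⟩ :=
      exists_noLoop_apply_eq (by omega) (⟨0, by omega⟩ : Fin T) (⟨0, by omega⟩ : Fin S)
    refine Submodule.mem_of_dvd_sum (single_sub_single_mem_of_fst_eq_of_snd_eq hS
      (fun _ _ => single_sub_single_mem_range_of_fst_eq (by omega) hT)
      (fun _ _ => single_sub_single_mem_range_of_snd_eq (by omega) hT))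
      (mem_range_self _ (Pi.single ⟨w, hw⟩ 1)) ?_
    rwa [mulVecLin_apply, designMatrix_mulVec_single, sum_trCount (by omega) hw]

section Counting

open Finset

variable {S : ℕ}

theorem card_offDiag (S : ℕ) : Fintype.card (OffDiag S) = S * (S - 1) := by
  have hfilter : univ.filter (fun p : Fin S × Fin S => p.1 ≠ p.2) = univ.offDiag := by
    ext
    simp
  rw [Fintype.card_subtype, hfilter, offDiag_card]
  simp [Nat.mul_sub_one]

theorem noLoop_cons_iff {n : ℕ} (a : Fin S) (u : Fin (n + 1) → Fin S) :
    NoLoop S (n + 2) (Fin.cons a u : Fin (n + 2) → Fin S) ↔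
      a ≠ u 0 ∧ NoLoop S (n + 1) u := by
  change (∀ t : Fin (n + 1), _) ↔ _
  rw [Fin.forall_fin_succ]
  simp only [NoLoop]
  rfl

theorem card_loopFreeWord (S n : ℕ) :
    Fintype.card (LoopFreeWord S (n + 1)) = S * (S - 1) ^ n := by
  induction n with
  | zero => simp [Fintype.card_subtype, NoLoop]
  | succ n ih =>
    rw [← Fintype.card_congr ((Fin.consEquiv fun _ => Fin S).subtypeEquiv
      (p := fun q => q.1 ≠ q.2 0 ∧ NoLoop S (n + 1) q.2)
      fun q => (noLoop_cons_iff q.1 q.2).symm)]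
    have hfiber (u : Fin (n + 1) → Fin S) :
        #{a | ¬a = u 0 ∧ NoLoop S (n + 1) u} = if NoLoop S (n + 1) u then S - 1 else 0 := by
      split_ifs with hu <;> simp [hu, filter_ne']
    rw [Fintype.card_subtype, card_filter, Fintype.sum_prod_type, sum_comm]
    simp only [sum_boole, hfiber, Nat.cast_id]
    rw [sum_ite, sum_const_zero, add_zero, sum_const, smul_eq_mul,
      ← Fintype.card_subtype, ih]
    ring

end Counting

/-- The Smith normal form of the design matrix of the THMC model without initial
parameters and without self-loops is `diag(1, …, 1, T-1)` of rank `S(S-1)`. -/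
theorem stmt6 (S T : ℕ) (hS : 3 ≤ S) (hT : 4 ≤ T) :
    ∃ (r : Fin (S * (S - 1)) ≃ {p : Fin S × Fin S // p.1 ≠ p.2})
      (c : Fin (S * (S - 1) ^ (T - 1)) ≃ {w : Fin T → Fin S // NoLoop S T w})
      (U : Matrix (Fin (S * (S - 1))) (Fin (S * (S - 1))) ℤ)
      (V : Matrix (Fin (S * (S - 1) ^ (T - 1))) (Fin (S * (S - 1) ^ (T - 1))) ℤ),
      IsUnit U.det ∧ IsUnit V.det ∧
      U * (Matrix.of fun (i : Fin (S * (S - 1))) (j : Fin (S * (S - 1) ^ (T - 1))) =>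
          (trCount S T (c j).1 (r i).1 : ℤ)) * V =
        Matrix.of fun (i : Fin (S * (S - 1))) (j : Fin (S * (S - 1) ^ (T - 1))) =>
          if (i : ℕ) = (j : ℕ) then
            (if (i : ℕ) = S * (S - 1) - 1 then (T : ℤ) - 1 else 1)
          else 0 := by
  have hm : 0 < S * (S - 1) := Nat.mul_pos (by omega) (by omega)
  have hmN : S * (S - 1) ≤ S * (S - 1) ^ (T - 1) :=
    Nat.mul_le_mul_left S (Nat.le_self_pow (by omega) _)
  have hcard : Fintype.card (LoopFreeWord S T) = S * (S - 1) ^ (T - 1) := by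
    obtain ⟨n, rfl⟩ : ∃ n, T = n + 1 := ⟨T - 1, by omega⟩
    exact card_loopFreeWord S n
  let r := (Fintype.equivFinOfCardEq (card_offDiag S)).symm
  let c := (Fintype.equivFinOfCardEq hcard).symm
  let last : Fin (S * (S - 1)) := ⟨S * (S - 1) - 1, by omega⟩
  let U := (1 : Matrix (Fin (S * (S - 1))) (Fin (S * (S - 1))) ℤ).updateRow last 1
  have hU : IsUnit U.det := by simp [U, det_updateRow_one_one]
  have hrange : range (U * (designMatrix S T).submatrix r c).mulVecLin =
      range (smithDiag _ (S * (S - 1) ^ (T - 1)) ((T : ℤ) - 1)).mulVecLin := by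
    ext y
    rw [mem_range_mul_mulVecLin_iff hU, mem_range_submatrix_mulVecLin_iff,
      mem_range_designMatrix_iff hS (by omega), mem_range_smithDiag_iff hmN hm]
    simp only [Function.comp_apply]
    rw [Equiv.sum_comp r.symm (U⁻¹ *ᵥ y), ← updateRow_one_one_mulVec_self last,
      mulVec_mulVec, mul_nonsing_inv _ hU, one_mulVec]
  obtain ⟨V, hV, hUAV⟩ := exists_isUnit_det_mul_eq_of_range_eq hrange
  exact ⟨r, c, U, V, hU, hV, hUAV⟩
end

section
/- For S = 3 and T ≥ 4, the set of lattice points in the polytope P = conv(A), where A is the set of transition-count columns of the design matrix of the THMC model without initial parameters and without self-loops, is exactly the set of columns of A; i.e., P ∩ ℤ⁶ = A. -/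
lemma trCount_cons (n : ℕ) (v : Fin 3) (w : Fin (n+1) → Fin 3) (p : Fin 3 × Fin 3) :
    trCount 3 (n+2) (Fin.cons v w) p
      = (if v = p.1 ∧ w 0 = p.2 then 1 else 0) + trCount 3 (n+1) w p := by
  unfold trCount
  rw [Finset.card_filter, Finset.card_filter]
  show (∑ i : Fin (n+1), if (Fin.cons v w : Fin (n+2) → Fin 3) ⟨i.1, by omega⟩ = p.1 ∧
      (Fin.cons v w : Fin (n+2) → Fin 3) ⟨i.1 + 1, by omega⟩ = p.2 then 1 else 0) = _ +
      (∑ i : Fin n, if w ⟨i.1, by omega⟩ = p.1 ∧ w ⟨i.1 + 1, by omega⟩ = p.2 then 1 else 0)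
  rw [Fin.sum_univ_succ]
  rfl


lemma noLoop_cons (n : ℕ) (v : Fin 3) (w : Fin (n+1) → Fin 3) (hv : v ≠ w 0)
    (hw : NoLoop 3 (n+1) w) : NoLoop 3 (n+2) (Fin.cons v w) := by
  intro t
  rcases t with ⟨t, ht⟩
  match t, ht with
  | 0, ht =>
    show v ≠ w ⟨0, by omega⟩
    have : w ⟨0, by omega⟩ = w 0 := by congr 1
    rw [this]; exact hv
  | (k+1), ht =>
    show w ⟨k, by omega⟩ ≠ w ⟨k+1, by omega⟩
    exact hw ⟨k, by omega⟩

lemma noLoop_tail (n : ℕ) (w : Fin (n+2) → Fin 3) (hw : NoLoop 3 (n+2) w) :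
    NoLoop 3 (n+1) (fun i : Fin (n+1) => w i.succ) := by
  intro t
  rcases t with ⟨t, ht⟩
  show w ⟨t+1, by omega⟩ ≠ w ⟨t+2, by omega⟩
  exact hw ⟨t+1, by omega⟩

lemma trCount_zero (w : Fin 1 → Fin 3) (p : Fin 3 × Fin 3) : trCount 3 1 w p = 0 := by
  unfold trCount; simp


set_option maxHeartbeats 1000000 in
lemma step_aux (i0 i1 L : Fin 3) (hne : i0 ≠ i1) (n a b c d e f : ℕ)
    (hs : a + b + c + d + e + f = n)
    (hb0 : a + c + (if L = 0 then 1 else 0) = b + d + (if i1 = 0 then 1 else 0))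
    (hb1 : b + e + (if L = 1 then 1 else 0) = a + f + (if i1 = 1 then 1 else 0))
    (hb2 : d + f + (if L = 2 then 1 else 0) = c + e + (if i1 = 2 then 1 else 0)) :
    ((if i0 = 0 ∧ i1 = 1 then 1 else 0) + a) + ((if i0 = 1 ∧ i1 = 0 then 1 else 0) + b) +
      ((if i0 = 0 ∧ i1 = 2 then 1 else 0) + c) + ((if i0 = 2 ∧ i1 = 0 then 1 else 0) + d) +
      ((if i0 = 1 ∧ i1 = 2 then 1 else 0) + e) + ((if i0 = 2 ∧ i1 = 1 then 1 else 0) + f) = n + 1 ∧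
    (((if i0 = 0 ∧ i1 = 1 then 1 else 0) + a) + ((if i0 = 0 ∧ i1 = 2 then 1 else 0) + c) +
        (if L = 0 then 1 else 0)
      = ((if i0 = 1 ∧ i1 = 0 then 1 else 0) + b) + ((if i0 = 2 ∧ i1 = 0 then 1 else 0) + d) +
        (if i0 = 0 then 1 else 0)) ∧
    (((if i0 = 1 ∧ i1 = 0 then 1 else 0) + b) + ((if i0 = 1 ∧ i1 = 2 then 1 else 0) + e) +
        (if L = 1 then 1 else 0)
      = ((if i0 = 0 ∧ i1 = 1 then 1 else 0) + a) + ((if i0 = 2 ∧ i1 = 1 then 1 else 0) + f) +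
        (if i0 = 1 then 1 else 0)) ∧
    (((if i0 = 2 ∧ i1 = 0 then 1 else 0) + d) + ((if i0 = 2 ∧ i1 = 1 then 1 else 0) + f) +
        (if L = 2 then 1 else 0)
      = ((if i0 = 0 ∧ i1 = 2 then 1 else 0) + c) + ((if i0 = 1 ∧ i1 = 2 then 1 else 0) + e) +
        (if i0 = 2 then 1 else 0)) := by
  fin_cases i0 <;> fin_cases i1 <;> fin_cases L <;> simp_all <;> omega

lemma count_facts (n : ℕ) : ∀ (w : Fin (n+1) → Fin 3), NoLoop 3 (n+1) w →
    trCount 3 (n+1) w (0,1) + trCount 3 (n+1) w (1,0) + trCount 3 (n+1) w (0,2) +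
      trCount 3 (n+1) w (2,0) + trCount 3 (n+1) w (1,2) + trCount 3 (n+1) w (2,1) = n ∧
    (trCount 3 (n+1) w (0,1) + trCount 3 (n+1) w (0,2) + (if w ⟨n, by omega⟩ = 0 then 1 else 0)
      = trCount 3 (n+1) w (1,0) + trCount 3 (n+1) w (2,0) + (if w ⟨0, by omega⟩ = 0 then 1 else 0)) ∧
    (trCount 3 (n+1) w (1,0) + trCount 3 (n+1) w (1,2) + (if w ⟨n, by omega⟩ = 1 then 1 else 0)
      = trCount 3 (n+1) w (0,1) + trCount 3 (n+1) w (2,1) + (if w ⟨0, by omega⟩ = 1 then 1 else 0)) ∧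
    (trCount 3 (n+1) w (2,0) + trCount 3 (n+1) w (2,1) + (if w ⟨n, by omega⟩ = 2 then 1 else 0)
      = trCount 3 (n+1) w (0,2) + trCount 3 (n+1) w (1,2) + (if w ⟨0, by omega⟩ = 2 then 1 else 0))
  := by
  induction n with
  | zero => intro w h; simp [trCount_zero]
  | succ n IH =>
    intro w h
    have hzero : (⟨0, by omega⟩ : Fin (n+2)) = 0 := by ext; simp
    have hzero1 : (⟨0, by omega⟩ : Fin (n+1)) = 0 := by ext; simp
    set w₁ : Fin (n+1) → Fin 3 := fun i => w i.succ with hw₁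
    have hwc : w = Fin.cons (w 0) w₁ := funext fun i => Fin.cases rfl (fun j => rfl) i
    obtain ⟨hs, hb0, hb1, hb2⟩ := IH w₁ (noLoop_tail n w h)
    have key : ∀ p : Fin 3 × Fin 3, trCount 3 (n+2) w p
        = (if w 0 = p.1 ∧ w₁ 0 = p.2 then 1 else 0) + trCount 3 (n+1) w₁ p := by
      intro p
      calc trCount 3 (n+2) w p = trCount 3 (n+2) (Fin.cons (w 0) w₁) p := by rw [← hwc]
        _ = _ := trCount_cons n (w 0) w₁ p
    have k01 := key (0,1); have k10 := key (1,0); have k02 := key (0,2)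
    have k20 := key (2,0); have k12 := key (1,2); have k21 := key (2,1)
    have hne : w 0 ≠ w₁ 0 := by
      have := h ⟨0, by omega⟩
      exact this
    have hlast : w₁ (⟨n, by omega⟩ : Fin (n+1)) = w ⟨n+1, by omega⟩ := rfl
    rw [hlast, hzero1] at hb0 hb1 hb2
    rw [hzero, k01, k10, k02, k20, k12, k21]
    exact step_aux (w 0) (w₁ 0) (w ⟨n+1, by omega⟩) hne n _ _ _ _ _ _ hs hb0 hb1 hb2
lemma build (n : ℕ) : ∀ (a b c d e f : ℕ) (v : Fin 3),
    a + b + c + d + e + f = n →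
    (n = 0 ∨ ((v = 0 → 0 < a + c ∧ b + d ≤ a + c ∧ a + c ≤ b + d + 1 ∧ b + e ≤ a + f ∧ a + f ≤ b + e + 1 ∧ d + f ≤ c + e ∧ c + e ≤ d + f + 1) ∧ (v = 1 → 0 < b + e ∧ a + f ≤ b + e ∧ b + e ≤ a + f + 1 ∧ a + c ≤ b + d ∧ b + d ≤ a + c + 1 ∧ d + f ≤ c + e ∧ c + e ≤ d + f + 1) ∧ (v = 2 → 0 < d + f ∧ c + e ≤ d + f ∧ d + f ≤ c + e + 1 ∧ a + c ≤ b + d ∧ b + d ≤ a + c + 1 ∧ b + e ≤ a + f ∧ a + f ≤ b + e + 1))) →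
    ∃ w : Fin (n+1) → Fin 3, NoLoop 3 (n+1) w ∧ w 0 = v ∧
      trCount 3 (n+1) w (0,1) = a ∧ trCount 3 (n+1) w (1,0) = b ∧
      trCount 3 (n+1) w (0,2) = c ∧ trCount 3 (n+1) w (2,0) = d ∧
      trCount 3 (n+1) w (1,2) = e ∧ trCount 3 (n+1) w (2,1) = f := by
  induction n with
  | zero =>
    intro a b c d e f v hsum _
    refine ⟨fun _ => v, fun t => absurd t.2 (Nat.not_lt_zero _), rfl, ?_, ?_, ?_, ?_, ?_, ?_⟩ <;>
      rw [trCount_zero] <;> omega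
  | succ n IH =>
    intro a b c d e f v hsum hG
    replace hG := hG.resolve_left (by omega)
    have h3 : ∀ i : Fin 3, i = 0 ∨ i = 1 ∨ i = 2 := by decide
    rcases h3 v with hv | hv | hv <;> subst hv
    · have hg := hG.1
      by_cases hA : 1 ≤ a ∧ (1 ≤ b + e ∨ n = 0)
      · obtain ⟨w, hnl, hw0, h01, h10, h02, h20, h12, h21⟩ :=
          IH (a - 1) b c d e f 1 (by omega) (by
            rcases Nat.eq_zero_or_pos n with h | h
            · exact Or.inl h
            · exact Or.inr ⟨fun hh => absurd hh (by decide), fun _ => by omega, fun hh => absurd hh (by decide)⟩)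
        refine ⟨Fin.cons 0 w, noLoop_cons n 0 w (by rw [hw0]; decide) hnl,
          Fin.cons_zero _ _, ?_, ?_, ?_, ?_, ?_, ?_⟩ <;>
          rw [trCount_cons, hw0] <;> split_ifs with hif <;>
          first
            | omega
            | exact absurd hif (by decide)
            | exact absurd (by decide) hif
      · by_cases hB : 1 ≤ c ∧ (1 ≤ d + f ∨ n = 0)
        · obtain ⟨w, hnl, hw0, h01, h10, h02, h20, h12, h21⟩ :=
            IH a b (c - 1) d e f 2 (by omega) (by
              rcases Nat.eq_zero_or_pos n with h | h
              · exact Or.inl h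
              · exact Or.inr ⟨fun hh => absurd hh (by decide), fun hh => absurd hh (by decide), fun _ => by omega⟩)
          refine ⟨Fin.cons 0 w, noLoop_cons n 0 w (by rw [hw0]; decide) hnl,
            Fin.cons_zero _ _, ?_, ?_, ?_, ?_, ?_, ?_⟩ <;>
            rw [trCount_cons, hw0] <;> split_ifs with hif <;>
            first
              | omega
              | exact absurd hif (by decide)
              | exact absurd (by decide) hif
        · exfalso
          omega
    · have hg := hG.2.1
      by_cases hA : 1 ≤ b ∧ (1 ≤ a + c ∨ n = 0)
      · obtain ⟨w, hnl, hw0, h01, h10, h02, h20, h12, h21⟩ :=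
          IH a (b - 1) c d e f 0 (by omega) (by
            rcases Nat.eq_zero_or_pos n with h | h
            · exact Or.inl h
            · exact Or.inr ⟨fun _ => by omega, fun hh => absurd hh (by decide), fun hh => absurd hh (by decide)⟩)
        refine ⟨Fin.cons 1 w, noLoop_cons n 1 w (by rw [hw0]; decide) hnl,
          Fin.cons_zero _ _, ?_, ?_, ?_, ?_, ?_, ?_⟩ <;>
          rw [trCount_cons, hw0] <;> split_ifs with hif <;>
          first
            | omega
            | exact absurd hif (by decide)
            | exact absurd (by decide) hif
      · by_cases hB : 1 ≤ e ∧ (1 ≤ d + f ∨ n = 0)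
        · obtain ⟨w, hnl, hw0, h01, h10, h02, h20, h12, h21⟩ :=
            IH a b c d (e - 1) f 2 (by omega) (by
              rcases Nat.eq_zero_or_pos n with h | h
              · exact Or.inl h
              · exact Or.inr ⟨fun hh => absurd hh (by decide), fun hh => absurd hh (by decide), fun _ => by omega⟩)
          refine ⟨Fin.cons 1 w, noLoop_cons n 1 w (by rw [hw0]; decide) hnl,
            Fin.cons_zero _ _, ?_, ?_, ?_, ?_, ?_, ?_⟩ <;>
            rw [trCount_cons, hw0] <;> split_ifs with hif <;>
            first
              | omega
              | exact absurd hif (by decide)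
              | exact absurd (by decide) hif
        · exfalso
          omega
    · have hg := hG.2.2
      by_cases hA : 1 ≤ d ∧ (1 ≤ a + c ∨ n = 0)
      · obtain ⟨w, hnl, hw0, h01, h10, h02, h20, h12, h21⟩ :=
          IH a b c (d - 1) e f 0 (by omega) (by
            rcases Nat.eq_zero_or_pos n with h | h
            · exact Or.inl h
            · exact Or.inr ⟨fun _ => by omega, fun hh => absurd hh (by decide), fun hh => absurd hh (by decide)⟩)
        refine ⟨Fin.cons 2 w, noLoop_cons n 2 w (by rw [hw0]; decide) hnl,
          Fin.cons_zero _ _, ?_, ?_, ?_, ?_, ?_, ?_⟩ <;>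
          rw [trCount_cons, hw0] <;> split_ifs with hif <;>
          first
            | omega
            | exact absurd hif (by decide)
            | exact absurd (by decide) hif
      · by_cases hB : 1 ≤ f ∧ (1 ≤ b + e ∨ n = 0)
        · obtain ⟨w, hnl, hw0, h01, h10, h02, h20, h12, h21⟩ :=
            IH a b c d e (f - 1) 1 (by omega) (by
              rcases Nat.eq_zero_or_pos n with h | h
              · exact Or.inl h
              · exact Or.inr ⟨fun hh => absurd hh (by decide), fun _ => by omega, fun hh => absurd hh (by decide)⟩)
          refine ⟨Fin.cons 2 w, noLoop_cons n 2 w (by rw [hw0]; decide) hnl,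
            Fin.cons_zero _ _, ?_, ?_, ?_, ?_, ?_, ?_⟩ <;>
            rw [trCount_cons, hw0] <;> split_ifs with hif <;>
            first
              | omega
              | exact absurd hif (by decide)
              | exact absurd (by decide) hif
        · exfalso
          omega

def E01 : {p : Fin 3 × Fin 3 // p.1 ≠ p.2} := ⟨(0,1), by decide⟩
def E10 : {p : Fin 3 × Fin 3 // p.1 ≠ p.2} := ⟨(1,0), by decide⟩
def E02 : {p : Fin 3 × Fin 3 // p.1 ≠ p.2} := ⟨(0,2), by decide⟩
def E20 : {p : Fin 3 × Fin 3 // p.1 ≠ p.2} := ⟨(2,0), by decide⟩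
def E12 : {p : Fin 3 × Fin 3 // p.1 ≠ p.2} := ⟨(1,2), by decide⟩
def E21 : {p : Fin 3 × Fin 3 // p.1 ≠ p.2} := ⟨(2,1), by decide⟩

lemma abs_helper (A B C D l f : ℕ) (hl : l ≤ 1) (hf : f ≤ 1) (h : A + B + l = C + D + f) :
    |((A:ℝ) + B) - ((C:ℝ) + D)| ≤ 1 := by
  have hR : (A:ℝ) + B + l = (C:ℝ) + D + f := by exact_mod_cast h
  have h1 : (l:ℝ) ≤ 1 := by exact_mod_cast hl
  have h2 : (f:ℝ) ≤ 1 := by exact_mod_cast hf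
  have h3 : (0:ℝ) ≤ l := Nat.cast_nonneg l
  have h4 : (0:ℝ) ≤ f := Nat.cast_nonneg f
  rw [abs_le]
  constructor <;> linarith


/-- For `S = 3` and `T ≥ 4`, the lattice points of the polytope `conv(A)` of the design
matrix of the THMC model without initial parameters and without self-loops are exactly
the columns of `A`. -/
theorem stmt10 (T : ℕ) (hT : 4 ≤ T)
    (x : {p : Fin 3 × Fin 3 // p.1 ≠ p.2} → ℤ) :
    (fun p => (x p : ℝ)) ∈
      convexHull ℝ (Set.range fun w : {w : Fin T → Fin 3 // NoLoop 3 T w} =>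
        fun p : {p : Fin 3 × Fin 3 // p.1 ≠ p.2} => (trCount 3 T w.1 p.1 : ℝ)) ↔
    ∃ w : Fin T → Fin 3, NoLoop 3 T w ∧ ∀ p : {p : Fin 3 × Fin 3 // p.1 ≠ p.2},
      x p = trCount 3 T w p.1 := by
  obtain ⟨n, rfl⟩ : ∃ n, T = n + 1 := ⟨T - 1, by omega⟩
  have hn3 : 3 ≤ n := by omega
  constructor
  · intro h
    rw [convexHull_eq] at h
    obtain ⟨ι, t, wt, z, hw0, hw1, hzs, hcm⟩ := h
    rw [Finset.centerMass_eq_of_sum_1 _ _ hw1] at hcm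
    have hxp : ∀ p, (x p : ℝ) = ∑ i ∈ t, wt i * z i p := by
      intro p
      have := congrFun hcm p
      rw [Finset.sum_apply] at this
      simp only [Pi.smul_apply, smul_eq_mul] at this
      exact this.symm
    have gen : ∀ i ∈ t,
        (z i E01 + z i E10 + z i E02 + z i E20 + z i E12 + z i E21 = (n:ℝ)) ∧
        (∀ p, 0 ≤ z i p) ∧
        |(z i E01 + z i E02) - (z i E10 + z i E20)| ≤ 1 ∧
        |(z i E10 + z i E12) - (z i E01 + z i E21)| ≤ 1 ∧
        |(z i E20 + z i E21) - (z i E02 + z i E12)| ≤ 1 := by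
      intro i hi
      obtain ⟨u, hu⟩ := hzs i hi
      have hz : ∀ p : {p : Fin 3 × Fin 3 // p.1 ≠ p.2},
          z i p = ((trCount 3 (n+1) u.1 p.1 : ℕ) : ℝ) := by
        intro p; rw [← hu]
      obtain ⟨hcf1, hb0, hb1, hb2⟩ := count_facts n u.1 u.2
      refine ⟨?_, ?_, ?_, ?_, ?_⟩
      · rw [hz E01, hz E10, hz E02, hz E20, hz E12, hz E21]
        exact_mod_cast hcf1
      · intro p; rw [hz p]; positivity
      · rw [hz E01, hz E02, hz E10, hz E20]
        exact abs_helper _ _ _ _ _ _ (by split_ifs <;> norm_num) (by split_ifs <;> norm_num) hb0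
      · rw [hz E10, hz E12, hz E01, hz E21]
        exact abs_helper _ _ _ _ _ _ (by split_ifs <;> norm_num) (by split_ifs <;> norm_num) hb1
      · rw [hz E20, hz E21, hz E02, hz E12]
        exact abs_helper _ _ _ _ _ _ (by split_ifs <;> norm_num) (by split_ifs <;> norm_num) hb2
    -- sum fact
    have hX1 : (x E01 : ℝ) + x E10 + x E02 + x E20 + x E12 + x E21 = n := by
      rw [hxp E01, hxp E10, hxp E02, hxp E20, hxp E12, hxp E21]
      rw [← Finset.sum_add_distrib, ← Finset.sum_add_distrib, ← Finset.sum_add_distrib,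
        ← Finset.sum_add_distrib, ← Finset.sum_add_distrib]
      rw [Finset.sum_congr rfl (fun i hi => by
        rw [← mul_add, ← mul_add, ← mul_add, ← mul_add, ← mul_add, (gen i hi).1])]
      rw [← Finset.sum_mul, hw1, one_mul]
    have hXnn : ∀ p, (0:ℝ) ≤ (x p : ℝ) := by
      intro p
      rw [hxp p]
      exact Finset.sum_nonneg fun i hi => mul_nonneg (hw0 i hi) ((gen i hi).2.1 p)
    have hbal : ∀ P1 P2 P3 P4 : {p : Fin 3 × Fin 3 // p.1 ≠ p.2},
        (∀ i ∈ t, |(z i P1 + z i P2) - (z i P3 + z i P4)| ≤ 1) →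
        |((x P1 : ℝ) + x P2) - ((x P3 : ℝ) + x P4)| ≤ 1 := by
      intro P1 P2 P3 P4 hP
      rw [hxp P1, hxp P2, hxp P3, hxp P4]
      rw [← Finset.sum_add_distrib, ← Finset.sum_add_distrib, ← Finset.sum_sub_distrib]
      rw [Finset.sum_congr rfl (fun i hi =>
        show wt i * z i P1 + wt i * z i P2 - (wt i * z i P3 + wt i * z i P4)
          = wt i * ((z i P1 + z i P2) - (z i P3 + z i P4)) by ring)]
      calc |∑ i ∈ t, wt i * ((z i P1 + z i P2) - (z i P3 + z i P4))|
          ≤ ∑ i ∈ t, |wt i * ((z i P1 + z i P2) - (z i P3 + z i P4))| :=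
            Finset.abs_sum_le_sum_abs _ _
        _ ≤ ∑ i ∈ t, wt i * 1 := Finset.sum_le_sum fun i hi => by
            rw [abs_mul, abs_of_nonneg (hw0 i hi)]
            exact mul_le_mul_of_nonneg_left (hP i hi) (hw0 i hi)
        _ = 1 := by simp only [mul_one]; exact hw1
    have hB0 := hbal E01 E02 E10 E20 (fun i hi => (gen i hi).2.2.1)
    have hB1 := hbal E10 E12 E01 E21 (fun i hi => (gen i hi).2.2.2.1)
    have hB2 := hbal E20 E21 E02 E12 (fun i hi => (gen i hi).2.2.2.2)
    -- move to ℤ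
    have hZ1 : x E01 + x E10 + x E02 + x E20 + x E12 + x E21 = (n:ℤ) := by exact_mod_cast hX1
    have hZnn : ∀ p, 0 ≤ x p := fun p => by exact_mod_cast hXnn p
    have hZB0 : -1 ≤ (x E01 + x E02) - (x E10 + x E20) ∧
        (x E01 + x E02) - (x E10 + x E20) ≤ 1 := by
      have := abs_le.mp hB0; constructor <;> [exact_mod_cast this.1; exact_mod_cast this.2]
    have hZB1 : -1 ≤ (x E10 + x E12) - (x E01 + x E21) ∧
        (x E10 + x E12) - (x E01 + x E21) ≤ 1 := by
      have := abs_le.mp hB1; constructor <;> [exact_mod_cast this.1; exact_mod_cast this.2]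
    have hZB2 : -1 ≤ (x E20 + x E21) - (x E02 + x E12) ∧
        (x E20 + x E21) - (x E02 + x E12) ≤ 1 := by
      have := abs_le.mp hB2; constructor <;> [exact_mod_cast this.1; exact_mod_cast this.2]
    set a := (x E01).toNat with hadef
    set b := (x E10).toNat with hbdef
    set c := (x E02).toNat with hcdef
    set d := (x E20).toNat with hddef
    set e := (x E12).toNat with hedef
    set f := (x E21).toNat with hfdef
    have ha : (a:ℤ) = x E01 := Int.toNat_of_nonneg (hZnn E01)
    have hb : (b:ℤ) = x E10 := Int.toNat_of_nonneg (hZnn E10)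
    have hc : (c:ℤ) = x E02 := Int.toNat_of_nonneg (hZnn E02)
    have hd : (d:ℤ) = x E20 := Int.toNat_of_nonneg (hZnn E20)
    have he : (e:ℤ) = x E12 := Int.toNat_of_nonneg (hZnn E12)
    have hf : (f:ℤ) = x E21 := Int.toNat_of_nonneg (hZnn E21)
    have hs : a + b + c + d + e + f = n := by omega
    have hkey : ∃ v : Fin 3,
        ((v = 0 → 0 < a + c ∧ b + d ≤ a + c ∧ a + c ≤ b + d + 1 ∧ b + e ≤ a + f ∧ a + f ≤ b + e + 1 ∧ d + f ≤ c + e ∧ c + e ≤ d + f + 1) ∧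
         (v = 1 → 0 < b + e ∧ a + f ≤ b + e ∧ b + e ≤ a + f + 1 ∧ a + c ≤ b + d ∧ b + d ≤ a + c + 1 ∧ d + f ≤ c + e ∧ c + e ≤ d + f + 1) ∧
         (v = 2 → 0 < d + f ∧ c + e ≤ d + f ∧ d + f ≤ c + e + 1 ∧ a + c ≤ b + d ∧ b + d ≤ a + c + 1 ∧ b + e ≤ a + f ∧ a + f ≤ b + e + 1)) := by
      by_cases h0 : b + d < a + c
      · exact ⟨0, fun _ => by omega, fun hh => absurd hh (by decide), fun hh => absurd hh (by decide)⟩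
      · by_cases h1 : a + f < b + e
        · exact ⟨1, fun hh => absurd hh (by decide), fun _ => by omega, fun hh => absurd hh (by decide)⟩
        · by_cases h2 : c + e < d + f
          · exact ⟨2, fun hh => absurd hh (by decide), fun hh => absurd hh (by decide), fun _ => by omega⟩
          · by_cases p0 : 0 < a + c
            · exact ⟨0, fun _ => by omega, fun hh => absurd hh (by decide), fun hh => absurd hh (by decide)⟩
            · by_cases p1 : 0 < b + e
              · exact ⟨1, fun hh => absurd hh (by decide), fun _ => by omega, fun hh => absurd hh (by decide)⟩
              · exact ⟨2, fun hh => absurd hh (by decide), fun hh => absurd hh (by decide), fun _ => by omega⟩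
    obtain ⟨v, hinv⟩ := hkey
    obtain ⟨w, hnl, hw0, h01, h10, h02, h20, h12, h21⟩ :=
      build n a b c d e f v hs (Or.inr hinv)
    refine ⟨w, hnl, ?_⟩
    rintro ⟨⟨i, j⟩, hne⟩
    fin_cases i <;> fin_cases j <;> first
      | exact absurd rfl hne
      | (show x E01 = ((trCount 3 (n+1) w (0,1) : ℕ) : ℤ); rw [h01]; omega)
      | (show x E02 = ((trCount 3 (n+1) w (0,2) : ℕ) : ℤ); rw [h02]; omega)
      | (show x E10 = ((trCount 3 (n+1) w (1,0) : ℕ) : ℤ); rw [h10]; omega)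
      | (show x E12 = ((trCount 3 (n+1) w (1,2) : ℕ) : ℤ); rw [h12]; omega)
      | (show x E20 = ((trCount 3 (n+1) w (2,0) : ℕ) : ℤ); rw [h20]; omega)
      | (show x E21 = ((trCount 3 (n+1) w (2,1) : ℕ) : ℤ); rw [h21]; omega)
  · rintro ⟨w, hnl, hx⟩
    refine subset_convexHull ℝ _ ⟨⟨w, hnl⟩, ?_⟩
    funext p
    rw [hx p]
    push_cast
    rfl
end
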